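/- Let G be an additive group and let P be an element of G whose additive order is a prime p. Let x be a unit of ZMod p and set Q = ((x : ZMod p)).val • P. Let ζ be a unit of ZMod p of multiplicative order d, and let n be a positive natural number with d < n². Then x lies in the cyclic subgroup of (ZMod p)ˣ generated by ζ if and only if there exist natural numbers a ≤ n and b ≤ n such that ((ζ^b : (ZMod p)ˣ) : ZMod p).val • Q = (((ζ^n)^a : (ZMod p)ˣ) : ZMod p).val • P in G. -/

import Mathlib

/-!
Since `p` is the order of `P`, the map `u ↦ u.val • P` is injective on `ZMod p` and turns
products into iterated scalar multiplication, so `(ζ ^ b).val • Q = ((ζ ^ n) ^ a).val • P` says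
exactly `ζ ^ b * x = (ζ ^ n) ^ a` in `(ZMod p)ˣ`. If `x = ζ ^ m` with `m < d < n²`, write
`m = n q + r` with `q, r < n`; then `b = n - r` and `a = q + 1` work, since `b + m = n a`.
-/

theorem Nat.exists_add_eq_mul_of_lt_sq {m n : ℕ} (hm : m < n ^ 2) :
    ∃ a b, a ≤ n ∧ b ≤ n ∧ b + m = n * a := by
  have hn : 0 < n := Nat.pos_of_ne_zero (by rintro rfl; simp at hm)
  have hq : m / n < n := Nat.div_lt_of_lt_mul (by rwa [← sq])
  have hr : m % n < n := Nat.mod_lt m hn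
  refine ⟨m / n + 1, n - m % n, hq, Nat.sub_le n _, ?_⟩
  have hdiv := Nat.div_add_mod m n
  rw [Nat.mul_succ]
  omega

theorem IsOfFinOrder.mem_zpowers_iff_exists_pow_mul_eq_pow_pow {G : Type*} [Group G]
    {ζ x : G} (hζ : IsOfFinOrder ζ) {n : ℕ} (hn : orderOf ζ < n ^ 2) :
    x ∈ Subgroup.zpowers ζ ↔ ∃ a b, a ≤ n ∧ b ≤ n ∧ ζ ^ b * x = (ζ ^ n) ^ a := by
  constructor
  · intro hx
    obtain ⟨k, rfl⟩ := (Submonoid.mem_powers_iff _ _).mp (hζ.mem_powers_iff_mem_zpowers.mpr hx)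
    obtain ⟨a, b, ha, hb, hab⟩ :=
      Nat.exists_add_eq_mul_of_lt_sq ((Nat.mod_lt k hζ.orderOf_pos).trans hn)
    exact ⟨a, b, ha, hb, by rw [← pow_mod_orderOf ζ k, ← pow_add, hab, pow_mul]⟩
  · rintro ⟨a, b, -, -, h⟩
    rw [← inv_mul_eq_iff_eq_mul.mpr h.symm]
    exact mul_mem (inv_mem (Subgroup.npow_mem_zpowers ζ b))
      (pow_mem (Subgroup.npow_mem_zpowers ζ n) a)

namespace ZMod

variable {G : Type*} [AddGroup G] {P : G} {p : ℕ}

theorem val_nsmul_eq_val_nsmul_iff [NeZero p] (hP : addOrderOf P = p) (u v : ZMod p) :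
    u.val • P = v.val • P ↔ u = v := by
  rw [nsmul_eq_nsmul_iff_modEq, hP, ← natCast_eq_natCast_iff, natCast_zmod_val,
    natCast_zmod_val]

theorem val_mul_nsmul (hP : addOrderOf P = p) (u v : ZMod p) :
    (u * v).val • P = u.val • v.val • P := by
  subst hP
  rw [val_mul, mod_addOrderOf_nsmul, mul_nsmul']

end ZMod

theorem bsgs_implicit_membership_criterion_general
    {G : Type*} [AddGroup G] (P : G) (p : ℕ) (hp : p.Prime)
    (hP : addOrderOf P = p)
    (x : (ZMod p)ˣ) (Q : G) (hQ : Q = ((x : ZMod p)).val • P)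
    (ζ : (ZMod p)ˣ) (d n : ℕ) (hd : orderOf ζ = d)
    (hdn : d < n ^ 2) :
    x ∈ Subgroup.zpowers ζ ↔
      ∃ a b : ℕ, a ≤ n ∧ b ≤ n ∧
        ((ζ ^ b : (ZMod p)ˣ) : ZMod p).val • Q =
          (((ζ ^ n) ^ a : (ZMod p)ˣ) : ZMod p).val • P := by
  have : NeZero p := ⟨hp.ne_zero⟩
  have hunits (a b : ℕ) : ((ζ ^ b : (ZMod p)ˣ) : ZMod p).val • Q =
      (((ζ ^ n) ^ a : (ZMod p)ˣ) : ZMod p).val • P ↔ ζ ^ b * x = (ζ ^ n) ^ a := by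
    rw [hQ, ← ZMod.val_mul_nsmul hP, ZMod.val_nsmul_eq_val_nsmul_iff hP, ← Units.val_mul,
      Units.val_inj]
  simp only [hunits]
  exact (isOfFinOrder_of_finite ζ).mem_zpowers_iff_exists_pow_mul_eq_pow_pow (hd ▸ hdn)

theorem bsgs_implicit_membership_criterion
    {G : Type*} [AddGroup G] (P : G) (p : ℕ) (hp : p.Prime)
    (hP : addOrderOf P = p)
    (x : (ZMod p)ˣ) (Q : G) (hQ : Q = ((x : ZMod p)).val • P)
    (ζ : (ZMod p)ˣ) (d n : ℕ) (hd : orderOf ζ = d)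
    (hn : 0 < n) (hdn : d < n ^ 2) :
    x ∈ Subgroup.zpowers ζ ↔
      ∃ a b : ℕ, a ≤ n ∧ b ≤ n ∧
        ((ζ ^ b : (ZMod p)ˣ) : ZMod p).val • Q =
          (((ζ ^ n) ^ a : (ZMod p)ˣ) : ZMod p).val • P :=
  bsgs_implicit_membership_criterion_general P p hp hP x Q hQ ζ d n hd hdn
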